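/- For every odd n ≥ 1, the Φ-generalized powers are antisymmetric: X^(n)(x₀,x) = −X^(n)(x,x₀) and X̃^(n)(x₀,x) = −X̃^(n)(x,x₀). -/

import Mathlib

noncomputable def genX (Φ : ℝ → ℂ) : ℕ → ℝ → ℝ → ℂ
  | 0 => fun _ _ => 1
  | n + 1 => fun x₀ x =>
      (n + 1 : ℕ) * ∫ ξ in x₀..x, genX Φ n x₀ ξ * Φ ξ ^ ((-1 : ℤ) ^ (n + 1))

noncomputable def genXt (Φ : ℝ → ℂ) : ℕ → ℝ → ℝ → ℂ
  | 0 => fun _ _ => 1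
  | n + 1 => fun x₀ x =>
      (n + 1 : ℕ) * ∫ ξ in x₀..x, genXt Φ n x₀ ξ * Φ ξ ^ (-((-1 : ℤ) ^ (n + 1)))

/-! `genX Φ n x₀ x` is `n!` times the iterated integral over the simplex
`x₀ ≤ ξ₁ ≤ ⋯ ≤ ξₙ ≤ x` of `Φ(ξ₁)⁻¹ Φ(ξ₂) Φ(ξ₃)⁻¹ ⋯`, and `genXt Φ = genX Φ⁻¹`.
Exchanging the order of integration on a triangle lets the recursion peel off the first variable
instead of the last; by induction, swapping the endpoints then multiplies `genX Φ n` by `(-1)ⁿ`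
and reverses the alternating exponent pattern, i.e. `Φ` is replaced by `Φ ^ (-1)^(n+1)`.
For odd `n` the pattern is a palindrome, which is the antisymmetry. Continuity on `[a, b]` suffices
because `genX` only sees `Φ` between its endpoints, so `Φ` may be extended through `projIcc`. -/

open MeasureTheory intervalIntegral Set Function

section

variable {E : Type*} [NormedAddCommGroup E] [NormedSpace ℝ E]

theorem intervalIntegral.integral_indicator_Ici {f : ℝ → E} {a b c : ℝ} (h : c ∈ Icc a b) :
    ∫ x in a..b, (Ici c).indicator f x = ∫ x in c..b, f x := by
  rw [integral_of_le (h.1.trans h.2), integral_of_le h.2,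
    MeasureTheory.integral_indicator measurableSet_Ici, Measure.restrict_restrict measurableSet_Ici,
    setIntegral_congr_set (Ioi_ae_eq_Ici.symm.inter (ae_eq_refl (Ioc a b))), inter_comm,
    Ioc_inter_Ioi, sup_eq_right.2 h.1]

theorem integral_integral_triangle_swap_of_le {f : ℝ → ℝ → E} (hf : Continuous (uncurry f))
    {a b : ℝ} (hab : a ≤ b) :
    ∫ ξ in a..b, ∫ η in a..ξ, f η ξ = ∫ η in a..b, ∫ ξ in η..b, f η ξ := by
  set F : ℝ → ℝ → E := fun ξ η => {p : ℝ × ℝ | p.2 ≤ p.1}.indicator (fun p => f p.2 p.1) (ξ, η)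
  have hF : IntegrableOn (uncurry F) (uIoc a b ×ˢ uIoc a b) := by
    refine IntegrableOn.mono_set ?_ (prod_mono uIoc_subset_uIcc uIoc_subset_uIcc)
    exact ((hf.comp continuous_swap).continuousOn.integrableOn_compact
      (isCompact_uIcc.prod isCompact_uIcc)).indicator
      (isClosed_le continuous_snd continuous_fst).measurableSet
  calc ∫ ξ in a..b, ∫ η in a..ξ, f η ξ = ∫ ξ in a..b, ∫ η in a..b, F ξ η := by
        refine integral_congr fun ξ hξ => ?_
        rw [uIcc_of_le hab] at hξ
        exact (integral_indicator hξ).symm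
    _ = ∫ η in a..b, ∫ ξ in a..b, F ξ η := intervalIntegral_intervalIntegral_swap hF
    _ = ∫ η in a..b, ∫ ξ in η..b, f η ξ := by
        refine integral_congr fun η hη => ?_
        rw [uIcc_of_le hab] at hη
        exact integral_indicator_Ici hη

theorem integral_integral_triangle_swap {f : ℝ → ℝ → E} (hf : Continuous (uncurry f)) (a b : ℝ) :
    ∫ ξ in a..b, ∫ η in a..ξ, f η ξ = ∫ η in a..b, ∫ ξ in η..b, f η ξ := by
  rcases le_total a b with hab | hba
  · exact integral_integral_triangle_swap_of_le hf hab
  · have reverse (g : ℝ → ℝ → E) (c d : ℝ) :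
        ∫ ξ in c..d, ∫ η in c..ξ, g η ξ = ∫ ξ in d..c, ∫ η in ξ..c, g η ξ := by
      simp only [integral_symm _ c, intervalIntegral.integral_neg, neg_neg]
    rw [reverse, ← integral_integral_triangle_swap_of_le (f := fun η ξ => f ξ η)
      (hf.comp continuous_swap) hba, reverse]

theorem continuous_parametric_intervalIntegral_fst_snd {G : ℝ → ℝ → E}
    (hG : Continuous (uncurry G)) :
    Continuous fun p : ℝ × ℝ => ∫ ξ in p.1..p.2, G p.1 ξ := by
  have hint (p : ℝ × ℝ) (c d : ℝ) : IntervalIntegrable (G p.1) volume c d :=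
    (hG.comp (Continuous.prodMk_right p.1)).intervalIntegrable c d
  have hsplit : (fun p : ℝ × ℝ => ∫ ξ in p.1..p.2, G p.1 ξ) =
      fun p => (∫ ξ in 0..p.2, G p.1 ξ) - ∫ ξ in 0..p.1, G p.1 ξ :=
    funext fun p => (integral_interval_sub_left (hint p 0 p.2) (hint p 0 p.1)).symm
  rw [hsplit]
  have hG' : Continuous (uncurry fun (p : ℝ × ℝ) ξ => G p.1 ξ) :=
    hG.comp (continuous_fst.fst.prodMk continuous_snd)
  exact (continuous_parametric_intervalIntegral_of_continuous hG' continuous_snd).sub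
    (continuous_parametric_intervalIntegral_of_continuous hG' continuous_fst)

end

section

variable {Φ : ℝ → ℂ}

theorem continuous_genX (hc : Continuous Φ) (h0 : ∀ y, Φ y ≠ 0) (n : ℕ) :
    Continuous (uncurry (genX Φ n)) := by
  induction n with
  | zero => exact continuous_const
  | succ n ih =>
    exact continuous_const.mul (continuous_parametric_intervalIntegral_fst_snd
      (G := fun x₀ ξ => genX Φ n x₀ ξ * Φ ξ ^ ((-1 : ℤ) ^ (n + 1)))
      (ih.mul ((hc.zpow₀ _ fun y => .inl (h0 y)).comp continuous_snd)))

theorem genXt_eq_genX_inv (Φ : ℝ → ℂ) : genXt Φ = genX Φ⁻¹ := by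
  funext n
  induction n with
  | zero => rfl
  | succ n ih => simp only [genX, genXt, ih, Pi.inv_apply, inv_zpow']

theorem genX_succ_eq_integral_left (hc : Continuous Φ) (h0 : ∀ y, Φ y ≠ 0) (n : ℕ)
    (x₀ x : ℝ) :
    genX Φ (n + 1) x₀ x = (n + 1 : ℕ) * ∫ η in x₀..x, (Φ η)⁻¹ * genX Φ⁻¹ n η x := by
  induction n generalizing x with
  | zero => simp [genX]
  | succ n ih =>
    set e : ℤ := (-1) ^ (n + 1 + 1)
    set f : ℝ → ℝ → ℂ := fun η ξ => (n + 1 : ℕ) * ((Φ η)⁻¹ * genX Φ⁻¹ n η ξ * Φ ξ ^ e)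
    have hf : Continuous (uncurry f) :=
      continuous_const.mul ((((hc.inv₀ h0).comp continuous_fst).mul
        (continuous_genX (hc.inv₀ h0) (fun y => inv_ne_zero (h0 y)) n)).mul
        ((hc.zpow₀ e fun y => .inl (h0 y)).comp continuous_snd))
    have hinv : ∀ ξ, Φ⁻¹ ξ ^ ((-1 : ℤ) ^ (n + 1)) = Φ ξ ^ e := fun ξ => by
      rw [Pi.inv_apply, inv_zpow']
      congr 1
      ring
    calc genX Φ (n + 1 + 1) x₀ x = (n + 1 + 1 : ℕ) * ∫ ξ in x₀..x, ∫ η in x₀..ξ, f η ξ := by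
          rw [genX]
          dsimp only
          congr 1
          refine integral_congr fun ξ _ => ?_
          rw [ih, mul_assoc, ← intervalIntegral.integral_mul_const,
            ← intervalIntegral.integral_const_mul]
      _ = (n + 1 + 1 : ℕ) * ∫ η in x₀..x, ∫ ξ in η..x, f η ξ := by
          rw [integral_integral_triangle_swap hf]
      _ = (n + 1 + 1 : ℕ) * ∫ η in x₀..x, (Φ η)⁻¹ * genX Φ⁻¹ (n + 1) η x := by
          congr 1
          refine integral_congr fun η _ => ?_
          rw [genX]
          dsimp only
          simp only [f, hinv, mul_assoc, intervalIntegral.integral_const_mul]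
          ring

theorem genX_swap_eq_neg_one_pow_mul (hc : Continuous Φ) (h0 : ∀ y, Φ y ≠ 0) (n : ℕ)
    (x₀ x : ℝ) :
    genX Φ n x x₀ = (-1) ^ n * genX (Φ ^ (-1 : ℤ) ^ (n + 1)) n x₀ x := by
  induction n generalizing Φ x with
  | zero => simp [genX]
  | succ n ih =>
    have hΨ : Φ⁻¹ ^ (-1 : ℤ) ^ (n + 1) = Φ ^ (-1 : ℤ) ^ (n + 1 + 1) := by
      rw [inv_zpow']
      congr 1
      ring
    have hΨ_zpow (ξ : ℝ) : (Φ ^ (-1 : ℤ) ^ (n + 1 + 1)) ξ ^ (-1 : ℤ) ^ (n + 1) = (Φ ξ)⁻¹ := by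
      rw [Pi.pow_apply, ← zpow_mul, ← pow_add, Odd.neg_one_pow ⟨n + 1, by ring⟩, zpow_neg_one]
    rw [genX_succ_eq_integral_left hc h0, genX, integral_symm]
    dsimp only
    simp only [ih (hc.inv₀ h0) (fun y => inv_ne_zero (h0 y)), hΨ, hΨ_zpow]
    simp only [mul_left_comm (Φ _)⁻¹, intervalIntegral.integral_const_mul, mul_comm (Φ _)⁻¹]
    ring

theorem genX_congr_of_eqOn {Ψ : ℝ → ℂ} {x₀ x : ℝ} (h : EqOn Φ Ψ (uIcc x₀ x)) (n : ℕ) :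
    genX Φ n x₀ x = genX Ψ n x₀ x := by
  induction n generalizing x with
  | zero => rfl
  | succ n ih =>
    simp only [genX]
    congr 1
    refine integral_congr fun ξ hξ => ?_
    rw [ih (h.mono (uIcc_subset_uIcc_left hξ)), h hξ]

theorem genX_eq_neg_swap_of_odd {a b : ℝ} (hc : ContinuousOn Φ (Icc a b))
    (h0 : ∀ y ∈ Icc a b, Φ y ≠ 0) {x₀ x : ℝ} (hx₀ : x₀ ∈ Icc a b) (hx : x ∈ Icc a b) {n : ℕ}
    (hn : Odd n) : genX Φ n x₀ x = -genX Φ n x x₀ := by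
  have hab : a ≤ b := hx₀.1.trans hx₀.2
  set Ψ : ℝ → ℂ := fun y => Φ (projIcc a b hab y)
  have hΨc : Continuous Ψ :=
    hc.comp_continuous (continuous_subtype_val.comp continuous_projIcc) fun y =>
      (projIcc a b hab y).2
  have hΨ0 (y : ℝ) : Ψ y ≠ 0 := h0 _ (projIcc a b hab y).2
  have hΦΨ : EqOn Φ Ψ (Icc a b) := fun y hy => by simp [Ψ, projIcc_of_mem hab hy]
  have hsub : uIcc x₀ x ⊆ Icc a b := uIcc_subset_Icc hx₀ hx
  rw [genX_congr_of_eqOn (hΦΨ.mono hsub), genX_congr_of_eqOn (hΦΨ.mono (uIcc_comm x x₀ ▸ hsub)),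
    genX_swap_eq_neg_one_pow_mul hΨc hΨ0 n x₀ x, hn.add_one.neg_one_pow, zpow_one,
    hn.neg_one_pow, neg_one_mul, neg_neg]

end

theorem stmt_2 (a b : ℝ) (Φ : ℝ → ℂ) (hΦc : ContinuousOn Φ (Set.Icc a b))
    (hΦ0 : ∀ y ∈ Set.Icc a b, Φ y ≠ 0) (x₀ x : ℝ)
    (hx₀ : x₀ ∈ Set.Icc a b) (hx : x ∈ Set.Icc a b) (n : ℕ) (hn : Odd n) :
    genX Φ n x₀ x = -genX Φ n x x₀ ∧ genXt Φ n x₀ x = -genXt Φ n x x₀ := by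
  refine ⟨genX_eq_neg_swap_of_odd hΦc hΦ0 hx₀ hx hn, ?_⟩
  rw [genXt_eq_genX_inv]
  exact genX_eq_neg_swap_of_odd (hΦc.inv₀ hΦ0) (fun y hy => inv_ne_zero (hΦ0 y hy)) hx₀ hx hn
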